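/- arXiv:2603.14360 — 2 statements merged into one kernel-verified Lean document; each statement's English description precedes it below -/
import Mathlib

section
/- The M²RNN recurrence can simulate any vector-valued nonlinear RNN: setting f_t = 0, w_r = 0, and q_t = k_t = e₁ (the first standard basis vector in ℝ^K), the first row of the matrix state Z_t = tanh(H_{t-1} W + e₁ v_tᵀ), with H_t = Z_t, evolves as h_t = tanh(h_{t-1} W + v_tᵀ) where h_t = (H_t)_{1,:}, and the output y_t = H_tᵀ q_t equals h_tᵀ. Moreover, all other rows of H_t are determined by the same recurrence with zero input added only to the first row. -/
/-!
With `f = 0`, `k_t = e₁` enters the input only through the first row, and the first row of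
`H_{t-1} W` depends only on the first row of `H_{t-1}`. So by induction on `t` the first row
obeys the vector recurrence, for any entrywise activation; the readout `H_tᵀ e₁` selects it.
-/

section MatrixRNN

variable {ι κ R : Type*} [Fintype κ] [DecidableEq ι] [NonUnitalNonAssocSemiring R]

theorem row_eq_of_matrix_rnn (σ : R → R) (W : Matrix κ κ R) (v : ℕ → κ → R) (i₀ : ι)
    (H : ℕ → Matrix ι κ R) (h : ℕ → κ → R) (h₀ : ∀ j, H 0 i₀ j = h 0 j)
    (hH : ∀ t i j, H (t + 1) i j = σ ((H t * W) i j + if i = i₀ then v (t + 1) j else 0))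
    (hh : ∀ t j, h (t + 1) j = σ ((∑ l, h t l * W l j) + v (t + 1) j)) :
    ∀ t j, H t i₀ j = h t j := by
  intro t
  induction t with
  | zero => exact h₀
  | succ t ih =>
    intro j
    simp only [hH, hh, if_pos, Matrix.mul_apply, ih]

end MatrixRNN

/-- M²RNN with `f_t = 0`, `w_r = 0`, `q_t = k_t = e₁` simulates a vector-valued
nonlinear RNN in the first row of its state. -/
theorem m2rnn_simulates_vector_rnn (K V : ℕ) [NeZero K]
    (W : Matrix (Fin V) (Fin V) ℝ) (v : ℕ → Fin V → ℝ)
    (H : ℕ → Matrix (Fin K) (Fin V) ℝ) (h : ℕ → Fin V → ℝ)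
    (hH0 : H 0 = 0)
    -- H_{t+1} = Z_{t+1} = tanh(H_t W + e₁ v_{t+1}ᵀ)  (since f = 0)
    (hHrec : ∀ t i j,
      H (t + 1) i j =
        Real.tanh ((H t * W) i j + (if i = 0 then v (t + 1) j else 0)))
    (hh0 : h 0 = 0)
    (hhrec : ∀ t j,
      h (t + 1) j = Real.tanh ((∑ l, h t l * W l j) + v (t + 1) j)) :
    -- the first row of H_t equals h_t, the readout H_tᵀ e₁ (+ 0 ⊙ v_t) equals h_t,
    -- and all other rows follow the same recurrence with zero input
    ∀ t, (∀ j, H t 0 j = h t j) ∧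
      (∀ j, (∑ i, H t i j * (if i = 0 then (1 : ℝ) else 0)) + 0 * v t j = h t j) ∧
      (∀ i j, i ≠ 0 → H (t + 1) i j = Real.tanh ((H t * W) i j)) := by
  have first_row : ∀ t j, H t 0 j = h t j :=
    row_eq_of_matrix_rnn Real.tanh W v 0 H h (by simp [hH0, hh0]) hHrec hhrec
  intro t
  refine ⟨first_row t, fun j => ?_, fun i j hi => ?_⟩
  · rw [Fintype.sum_eq_single 0 (fun i hi => by simp [hi]), if_pos rfl, mul_one, zero_mul,
      add_zero, first_row]
  · rw [hHrec, if_neg hi, add_zero]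
end

section
/- The entrywise-tanh recurrence is not associative-scannable in the following precise sense: the family of maps F_{(W,b)} : ℝ → ℝ given by F_{(W,b)}(h) = tanh(Wh + b) is not closed under composition — there exist parameters (W₁,b₁), (W₂,b₂) such that F_{(W₂,b₂)} ∘ F_{(W₁,b₁)} ≠ F_{(W,b)} for every choice of (W,b). -/
/-!
With `W₁ = W₂ = 1` and `b₁ = b₂ = 0` the composite is `tanh ∘ tanh`. By injectivity of `tanh`,
`tanh ∘ tanh = tanh (W · + b)` would make `tanh` itself affine. A bounded affine map is constant,
whereas `tanh` is bounded and injective.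
-/

lemma eq_zero_of_forall_abs_mul_add_lt {W b C : ℝ} (hbound : ∀ x, |W * x + b| < C) : W = 0 := by
  by_contra hW
  have hC := hbound ((C - b) / W)
  rw [mul_div_cancel₀ _ hW, sub_add_cancel] at hC
  exact (le_abs_self C).not_gt hC

lemma Real.tanh_ne_affine (W b : ℝ) : Real.tanh ≠ fun x => W * x + b := by
  intro htanh
  have hW : W = 0 :=
    eq_zero_of_forall_abs_mul_add_lt (C := 1) fun x => congrFun htanh x ▸ Real.abs_tanh_lt_one x
  have hconst : Real.tanh 0 = Real.tanh 1 := by simp [htanh, hW]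
  exact zero_ne_one (Real.tanh_injective hconst)

/-- The one-dimensional tanh-RNN step family `h ↦ tanh (W h + b)` is not
closed under composition: some composition of two such maps is not equal (as a
function on ℝ) to any member of the family. -/
theorem tanh_family_not_closed_under_composition :
    ∃ W₁ b₁ W₂ b₂ : ℝ, ∀ W b : ℝ,
      (fun h : ℝ => Real.tanh (W₂ * Real.tanh (W₁ * h + b₁) + b₂)) ≠
      (fun h : ℝ => Real.tanh (W * h + b)) := by
  refine ⟨1, 0, 1, 0, fun W b hcomp => Real.tanh_ne_affine W b ?_⟩
  funext x
  exact Real.tanh_injective (by simpa using congrFun hcomp x)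
end
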